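/- For n ≥ 3, the language L_n of the DFA over {a,b,c} from Definition 1 (a: cycle (1,…,n−1), b: transposition (0,1), c: (1→0), initial 0, final n−1) has syntactic semigroup of cardinality n^n, the maximum possible for a language of state complexity n. -/

import Mathlib

/-- The number of classes of the syntactic congruence of `L` on nonempty words
(`x ≈ y` iff `∀ w z, wxz ∈ L ↔ wyz ∈ L`), i.e. the size of the syntactic semigroup. -/
noncomputable def syntacticSemigroupSize {α : Type*} (L : Language α) : ℕ :=
  Nat.card (Quot fun x y : {w : List α // w ≠ []} =>
    ∀ u z : List α, u ++ x.val ++ z ∈ L ↔ u ++ y.val ++ z ∈ L)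

/-!
Words act on the states of a DFA by transformations, and two words with the same action are
syntactically equivalent, so the syntactic semigroup is a quotient of the transition semigroup and
has at most `n ^ n` elements. When every state is reachable and no two states accept the same
language, conversely syntactically equivalent words have the same action, so the two semigroups
coincide.

For the witness, `a` fixes `0` and cycles the other states, so `ab` acts as the `n`-cycle
`q ↦ q + 1`; together with the transposition `b = (0 1)` it generates every permutation. Adding
the map `c`, which merges `1` into `0`, yields every transformation. The witness is minimal:
`b a^(p-1)` leads from `0` to `p`, and `a^(n-1-q)` accepts from `q` but not from any `p < q`.
Finally `bb` acts as the identity, so every transformation is induced by a nonempty word.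
-/

open Function Equiv

section Transformations

variable {α : Type*}

theorem Equiv.Perm.coe_mem_of_closure_eq_top [Finite α] {T : Submonoid (Function.End α)}
    {s : Set (Perm α)} (hs : Subgroup.closure s = ⊤) (hsT : ∀ π ∈ s, (⇑π : Function.End α) ∈ T)
    (π : Perm α) : (⇑π : Function.End α) ∈ T := by
  have hle : Submonoid.closure s ≤ T.comap MulAction.toEndHom := Submonoid.closure_le.mpr hsT
  exact hle (by rw [← Subgroup.closure_toSubmonoid_of_finite, hs]; trivial)

variable [DecidableEq α]

theorem Equiv.Perm.exists_apply_eq_apply_eq {a b i j : α} (hab : a ≠ b) (hij : i ≠ j) :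
    ∃ ρ : Perm α, ρ a = i ∧ ρ b = j := by
  set ρ₁ := swap a i
  have hb : ρ₁ b ≠ i := fun h => hab (ρ₁.injective (h.trans (swap_apply_left a i).symm)).symm
  exact ⟨swap (ρ₁ b) j * ρ₁, by simp [ρ₁, swap_apply_of_ne_of_ne hb.symm hij], by simp⟩

theorem Equiv.Perm.comp_update_id_comp_symm (ρ : Perm α) (a b : α) :
    ρ ∘ update id a b ∘ ρ.symm = update id (ρ a) (ρ b) := by
  funext x
  change ρ (update id a b (ρ.symm x)) = _
  rcases eq_or_ne x (ρ a) with rfl | hx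
  · simp
  · rw [update_of_ne (by rwa [Ne, symm_apply_eq]), update_of_ne hx]
    simp

theorem Function.update_comp_update_id_eq_self {f : α → α} {i j : α} (hij : i ≠ j)
    (hf : f i = f j) (v : α) : update f i v ∘ update id i j = f := by
  funext x
  change update f i v (update id i j x) = f x
  rcases eq_or_ne x i with rfl | hx
  · simp [update_of_ne hij.symm, hf]
  · simp [update_of_ne hx]

variable [Fintype α]

theorem Finset.card_image_lt_card_image_update {f : α → α} {i j v : α} (hij : i ≠ j)
    (hf : f i = f j) (hv : v ∉ Set.range f) :
    (univ.image f).card < (univ.image (update f i v)).card := by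
  refine card_lt_card (ssubset_iff.mpr ⟨v, by simpa using hv, ?_⟩)
  intro y hy
  simp only [mem_insert, mem_image, mem_univ, true_and] at hy ⊢
  rcases hy with rfl | ⟨x, rfl⟩
  · exact ⟨i, update_self i y f⟩
  · rcases eq_or_ne x i with rfl | hx
    · exact ⟨j, by rw [update_of_ne hij.symm, hf]⟩
    · exact ⟨x, update_of_ne hx v f⟩

theorem Submonoid.eq_top_of_coe_perm_mem_of_update_id_mem {T : Submonoid (Function.End α)}
    (hperm : ∀ π : Perm α, (⇑π : Function.End α) ∈ T) {a b : α} (hab : a ≠ b)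
    (hT : (update id a b : Function.End α) ∈ T) : T = ⊤ := by
  have hcollapse : ∀ i j : α, i ≠ j → (update id i j : Function.End α) ∈ T := by
    intro i j hij
    obtain ⟨ρ, rfl, rfl⟩ := Perm.exists_apply_eq_apply_eq hab hij
    rw [← Perm.comp_update_id_comp_symm]
    exact (mul_mem (mul_mem (hperm ρ) hT) (hperm ρ⁻¹) :)
  -- A non-injective `f` with `f i = f j` is `update f i v ∘ update id i j` for any `v` outside
  -- its range, and `update f i v` has a larger range: induct on the number of values `f` misses.
  refine (eq_top_iff' T).mpr fun (f : α → α) => ?_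
  induction hk : Fintype.card α - (Finset.univ.image f).card using Nat.strong_induction_on
    generalizing f with
  | _ k ih =>
  by_cases hinj : Injective f
  · exact hperm (Equiv.ofBijective f (Finite.injective_iff_bijective.mp hinj))
  obtain ⟨i, j, hf, hij⟩ : ∃ i j, f i = f j ∧ i ≠ j := by
    simpa [Injective] using hinj
  obtain ⟨v, hv⟩ : ∃ v, v ∉ Set.range f := by
    simpa [Surjective] using mt Finite.injective_iff_surjective.mpr hinj
  rw [← update_comp_update_id_eq_self hij hf v]
  refine mul_mem (ih _ ?_ _ rfl) (hcollapse i j hij)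
  have := Finset.card_image_lt_card_image_update hij hf hv
  have := Finset.card_le_univ (Finset.univ.image (update f i v))
  omega

end Transformations

theorem Fin.val_swap_zero_one {m : ℕ} (q : Fin (m + 2)) :
    (swap 0 1 q).val = if q.val = 0 then 1 else if q.val = 1 then 0 else q.val := by
  simp only [swap_apply_def, Fin.ext_iff, Fin.val_one]
  split_ifs <;> simp_all

theorem Fin.val_update_id_one_zero {m : ℕ} (q : Fin (m + 2)) :
    (update id 1 0 q).val = if q.val = 1 then 0 else q.val := by
  simp only [update_apply, Fin.ext_iff, Fin.val_one]
  split_ifs <;> simp_all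

namespace DFA

variable {α σ : Type*} (M : DFA α σ)

def transition (w : List α) : Function.End σ := fun q => M.evalFrom q w

theorem transition_append (x y : List α) :
    M.transition (x ++ y) = M.transition y * M.transition x :=
  funext fun q => M.evalFrom_of_append q x y

def transitionMonoid : Submonoid (Function.End σ) where
  carrier := Set.range M.transition
  mul_mem' := by
    rintro _ _ ⟨x, rfl⟩ ⟨y, rfl⟩
    exact ⟨y ++ x, M.transition_append y x⟩
  one_mem' := ⟨[], rfl⟩

theorem range_transition_ne_nil_eq_univ (htop : M.transitionMonoid = ⊤) {e : List α}
    (he : e ≠ []) (he_one : M.transition e = 1) :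
    Set.range (fun w : {w : List α // w ≠ []} => M.transition w.val) = Set.univ := by
  refine Set.eq_univ_of_forall fun f => ?_
  obtain ⟨w, rfl⟩ : f ∈ M.transitionMonoid := htop ▸ Submonoid.mem_top f
  exact ⟨⟨e ++ w, by simp [he]⟩, (M.transition_append e w).trans (by rw [he_one, mul_one])⟩

theorem append_append_mem_accepts_iff (u x z : List α) :
    u ++ x ++ z ∈ M.accepts ↔ z ∈ M.acceptsFrom (M.transition x (M.eval u)) := by
  rw [mem_accepts, eval, evalFrom_of_append, evalFrom_of_append]
  rfl

theorem transition_eq_iff (hreach : Surjective M.eval) (hsep : Injective M.acceptsFrom)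
    (x y : List α) :
    M.transition x = M.transition y ↔
      ∀ u z, u ++ x ++ z ∈ M.accepts ↔ u ++ y ++ z ∈ M.accepts := by
  simp only [append_append_mem_accepts_iff]
  refine ⟨fun h u z => by rw [h], fun h => funext fun p => hsep ?_⟩
  obtain ⟨u, rfl⟩ := hreach p
  exact Set.ext (h u)

theorem syntacticSemigroupSize_accepts_le [Finite σ] :
    syntacticSemigroupSize M.accepts ≤ Nat.card (σ → σ) := by
  set f : {w : List α // w ≠ []} → σ → σ := fun w => M.transition w.val
  have hker (x y) (h : f x = f y) (u z : List α) :
      u ++ x.val ++ z ∈ M.accepts ↔ u ++ y.val ++ z ∈ M.accepts := by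
    simp only [append_append_mem_accepts_iff]
    rw [show M.transition x.val = M.transition y.val from h]
  have : Finite (Quotient (Setoid.ker f)) := .of_equiv _ (Setoid.quotientKerEquivRange f).symm
  calc syntacticSemigroupSize M.accepts ≤ Nat.card (Quotient (Setoid.ker f)) :=
        Nat.card_le_card_of_surjective (Quot.factor _ _ hker)
          (Quot.ind fun x => ⟨Quot.mk _ x, rfl⟩)
    _ = Nat.card (Set.range f) := Nat.card_congr (Setoid.quotientKerEquivRange f)
    _ ≤ Nat.card (σ → σ) := Nat.card_le_card_of_injective _ Subtype.val_injective

theorem syntacticSemigroupSize_accepts_eq (hreach : Surjective M.eval)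
    (hsep : Injective M.acceptsFrom) :
    syntacticSemigroupSize M.accepts =
      Nat.card (Set.range fun w : {w : List α // w ≠ []} => M.transition w.val) := by
  rw [syntacticSemigroupSize, ← Nat.card_congr (Setoid.quotientKerEquivRange _)]
  exact Nat.card_congr (Quot.congrRight fun x y => (M.transition_eq_iff hreach hsep x y).symm)

end DFA

namespace DFA.MaximalWitness

variable {n : ℕ} {M : DFA (Fin 3) (Fin n)}

theorem val_evalFrom_replicate_zero
    (ha : ∀ q : Fin n,
      (M.step q 0).val = if q.val = 0 then 0 else if q.val = n - 1 then 1 else q.val + 1)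
    (p : Fin n) {k : ℕ} (hk : p.val + k ≤ n - 1) :
    (M.evalFrom p (List.replicate k 0)).val = if p.val = 0 then 0 else p.val + k := by
  induction k generalizing p with
  | zero => split_ifs <;> simp_all
  | succ k ih =>
    rw [List.replicate_succ, evalFrom_cons, ih _ (by rw [ha]; split_ifs <;> omega), ha]
    split_ifs <;> omega

theorem eval_surjective (hstart : M.start.val = 0)
    (ha : ∀ q : Fin n,
      (M.step q 0).val = if q.val = 0 then 0 else if q.val = n - 1 then 1 else q.val + 1)
    (hb : ∀ q : Fin n,
      (M.step q 1).val = if q.val = 0 then 1 else if q.val = 1 then 0 else q.val) :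
    Surjective M.eval := by
  intro p
  rcases Nat.eq_zero_or_pos p.val with hp | hp
  · exact ⟨[], Fin.ext (hstart.trans hp.symm)⟩
  · have h1 : (M.step M.start 1).val = 1 := by rw [hb, if_pos hstart]
    refine ⟨1 :: List.replicate (p.val - 1) 0, Fin.ext ?_⟩
    rw [eval, evalFrom_cons, val_evalFrom_replicate_zero ha _ (by omega), h1, if_neg one_ne_zero]
    omega

theorem acceptsFrom_injective (haccept : ∀ q : Fin n, q ∈ M.accept ↔ q.val = n - 1)
    (ha : ∀ q : Fin n,
      (M.step q 0).val = if q.val = 0 then 0 else if q.val = n - 1 then 1 else q.val + 1) :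
    Injective M.acceptsFrom := by
  refine Injective.of_lt_imp_ne fun p q (hpq : p.val < q.val) h => ?_
  have hq : List.replicate (n - 1 - q.val) 0 ∈ M.acceptsFrom q := by
    rw [mem_acceptsFrom, haccept, val_evalFrom_replicate_zero ha _ (by omega)]
    split_ifs <;> omega
  rw [← h, mem_acceptsFrom, haccept, val_evalFrom_replicate_zero ha _ (by omega)] at hq
  split_ifs at hq <;> omega

theorem transition_one_one
    (hb : ∀ q : Fin n,
      (M.step q 1).val = if q.val = 0 then 1 else if q.val = 1 then 0 else q.val) :
    M.transition [1, 1] = 1 := by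
  funext q
  apply Fin.ext
  change (M.step (M.step q 1) 1).val = q.val
  rw [hb, hb]
  split_ifs <;> first | contradiction | omega

theorem coe_finRotate_eq_transition {m : ℕ} {M : DFA (Fin 3) (Fin (m + 2))}
    (ha : ∀ q : Fin (m + 2),
      (M.step q 0).val = if q.val = 0 then 0 else if q.val = m + 2 - 1 then 1 else q.val + 1)
    (hb : ∀ q : Fin (m + 2),
      (M.step q 1).val = if q.val = 0 then 1 else if q.val = 1 then 0 else q.val) :
    (⇑(finRotate (m + 2)) : Function.End (Fin (m + 2))) = M.transition [0, 1] := by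
  funext q
  apply Fin.ext
  change _ = (M.step (M.step q 0) 1).val
  have := q.isLt
  rw [coe_finRotate, hb, ha]
  simp only [Fin.ext_iff, Fin.val_last]
  split_ifs <;> first | contradiction | omega

theorem transitionMonoid_eq_top (hn : 2 ≤ n)
    (ha : ∀ q : Fin n,
      (M.step q 0).val = if q.val = 0 then 0 else if q.val = n - 1 then 1 else q.val + 1)
    (hb : ∀ q : Fin n,
      (M.step q 1).val = if q.val = 0 then 1 else if q.val = 1 then 0 else q.val)
    (hc : ∀ q : Fin n, (M.step q 2).val = if q.val = 1 then 0 else q.val) :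
    M.transitionMonoid = ⊤ := by
  obtain ⟨m, rfl⟩ : ∃ m, n = m + 2 := ⟨n - 2, by omega⟩
  have hmem (w : List (Fin 3)) : M.transition w ∈ M.transitionMonoid := ⟨w, rfl⟩
  have hswap : (⇑(swap 0 1) : Function.End (Fin (m + 2))) = M.transition [1] :=
    funext fun q => Fin.ext ((Fin.val_swap_zero_one q).trans (hb q).symm)
  have hcollapse : (update id 1 0 : Function.End (Fin (m + 2))) = M.transition [2] :=
    funext fun q => Fin.ext ((Fin.val_update_id_one_zero q).trans (hc q).symm)
  have hgen := Perm.closure_cycle_adjacent_swap (isCycle_finRotate (n := m)) support_finRotate 0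
  rw [finRotate_apply, zero_add] at hgen
  refine Submonoid.eq_top_of_coe_perm_mem_of_update_id_mem
    (Perm.coe_mem_of_closure_eq_top hgen ?_) one_ne_zero (hcollapse ▸ hmem [2])
  rintro π (rfl | rfl)
  · exact coe_finRotate_eq_transition ha hb ▸ hmem [0, 1]
  · exact hswap ▸ hmem [1]

end DFA.MaximalWitness

/-- For `n ≥ 3`, the language `L_n` of the DFA over `{a,b,c}` of Definition 1
(encoded as `Fin 3`: `a = 0` the cycle `(1,…,n−1)` fixing `0`, `b = 1` the
transposition `(0,1)`, `c = 2` the map `(1 → 0)`; initial `0`; final `n−1`)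
has a syntactic semigroup of cardinality `n^n`, and this is the maximum possible
for any language accepted by a DFA with `n` states. -/
theorem syntactic_semigroup_of_witness (n : ℕ) (hn : 3 ≤ n) (M : DFA (Fin 3) (Fin n))
    (hstart : M.start = ⟨0, by omega⟩)
    (haccept : M.accept = {⟨n - 1, by omega⟩})
    (ha : ∀ q : Fin n,
      (M.step q 0).val = if q.val = 0 then 0 else if q.val = n - 1 then 1 else q.val + 1)
    (hb : ∀ q : Fin n,
      (M.step q 1).val = if q.val = 0 then 1 else if q.val = 1 then 0 else q.val)
    (hc : ∀ q : Fin n, (M.step q 2).val = if q.val = 1 then 0 else q.val) :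
    syntacticSemigroupSize M.accepts = n ^ n ∧
    ∀ (α : Type) (K : Language α) (N : DFA α (Fin n)),
      N.accepts = K → syntacticSemigroupSize K ≤ n ^ n := by
  open DFA.MaximalWitness in
  refine ⟨?_, fun α K N hNK => hNK ▸ N.syntacticSemigroupSize_accepts_le.trans_eq (by simp)⟩
  have hreach := eval_surjective (congrArg Fin.val hstart) ha hb
  have hsep := acceptsFrom_injective
    (fun q => by rw [haccept, Set.mem_singleton_iff, Fin.ext_iff]) ha
  have hrange := M.range_transition_ne_nil_eq_univ (transitionMonoid_eq_top (by omega) ha hb hc)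
    (by simp) (transition_one_one hb)
  rw [M.syntacticSemigroupSize_accepts_eq hreach hsep, hrange, Nat.card_univ]
  exact (Nat.card_fun (α := Fin n) (β := Fin n)).trans (by simp)
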